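/- arXiv:2404.02017 — 5 statements merged into one kernel-verified Lean document; each statement's English description precedes it below -/
import Mathlib

section
/- Let f : X × W → Y × W be a non-signalling stochastic matrix on finite nonempty sets, meaning the marginal Σ_y f(y, w | x, w') does not depend on w'. Then the trace Tr(f)(y|x) := Σ_w f(y, w | x, w) defines a stochastic matrix from X to Y, i.e. Σ_y Tr(f)(y|x) = 1 for all x. -/
open NNReal

theorem sum_trace_eq_sum_of_nonsignalling {X W Y M : Type*} [Fintype W] [Fintype Y]
    [AddCommMonoid M] (f : X × W → Y × W → M)
    (hns : ∀ (x : X) (w w₁ w₂ : W), ∑ y, f (x, w₁) (y, w) = ∑ y, f (x, w₂) (y, w))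
    (x : X) (w₀ : W) :
    ∑ y, ∑ w, f (x, w) (y, w) = ∑ yw : Y × W, f (x, w₀) yw := by
  rw [Finset.sum_comm, Fintype.sum_prod_type_right]
  exact Finset.sum_congr rfl fun w _ => hns x w w w₀

theorem trace_nonsignalling_stochastic_general {X W Y : Type} [Fintype W]
    [Fintype Y] [Nonempty W]
    (f : X × W → Y × W → ℝ≥0)
    (hstoch : ∀ xw : X × W, ∑ yw : Y × W, f xw yw = 1)
    (hns : ∀ (x : X) (w w₁ w₂ : W),
      ∑ y, f (x, w₁) (y, w) = ∑ y, f (x, w₂) (y, w)) :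
    ∀ x : X, ∑ y, ∑ w, f (x, w) (y, w) = 1 := by
  intro x
  obtain ⟨w₀⟩ := ‹Nonempty W›
  rw [sum_trace_eq_sum_of_nonsignalling f hns x w₀, hstoch]

/-- The trace of a non-signalling stochastic matrix `f : X ⊗ W → Y ⊗ W`
is again a stochastic matrix. -/
theorem trace_nonsignalling_stochastic {X W Y : Type} [Fintype X] [Fintype W]
    [Fintype Y] [Nonempty W]
    (f : X × W → Y × W → ℝ≥0)
    (hstoch : ∀ xw : X × W, ∑ yw : Y × W, f xw yw = 1)
    (hns : ∀ (x : X) (w w₁ w₂ : W),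
      ∑ y, f (x, w₁) (y, w) = ∑ y, f (x, w₂) (y, w)) :
    ∀ x : X, ∑ y, ∑ w, f (x, w) (y, w) = 1 :=
  trace_nonsignalling_stochastic_general f hstoch hns
end

section
/- Comb insertion is well-defined under optic equivalence in any symmetric monoidal category: if combs (E, f₁, g₁) and (E', f₂, g₂) of type (A,A') → (B,B') are related by sliding — i.e. there exists s : E → E' with f₂ = (s ⊗ id_B) ∘ f₁ and g₁ = g₂ ∘ (s ⊗ id_{B'}) — then for every h : B ⊗ K → B' ⊗ K', the insertions agree: (g₁ ⊗ id_{K'}) ∘ (id_E ⊗ h) ∘ (f₁ ⊗ id_K) = (g₂ ⊗ id_{K'}) ∘ (id_{E'} ⊗ h) ∘ (f₂ ⊗ id_K). -/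
open CategoryTheory MonoidalCategory

/-- Comb insertion `C[h]` for a comb `(E, f, g) : (A,A') → (B,B')` and
`h : B ⊗ K ⟶ B' ⊗ K'`. -/
noncomputable def combInsert {C : Type*} [Category C] [MonoidalCategory C]
    {A A' B B' E K K' : C} (f : A ⟶ E ⊗ B) (g : E ⊗ B' ⟶ A')
    (h : B ⊗ K ⟶ B' ⊗ K') : A ⊗ K ⟶ A' ⊗ K' :=
  (f ▷ K) ≫ (α_ E B K).hom ≫ (E ◁ h) ≫ (α_ E B' K').inv ≫ (g ▷ K')

section

variable {C : Type*} [Category C] [MonoidalCategory C]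

theorem whiskerRight_whiskerRight_associator_whiskerLeft {X Y B B' K K' : C}
    (s : X ⟶ Y) (h : B ⊗ K ⟶ B' ⊗ K') :
    s ▷ B ▷ K ≫ (α_ Y B K).hom ≫ Y ◁ h ≫ (α_ Y B' K').inv =
      (α_ X B K).hom ≫ X ◁ h ≫ (α_ X B' K').inv ≫ s ▷ B' ▷ K' := by
  rw [associator_naturality_left_assoc, ← whisker_exchange_assoc,
    associator_inv_naturality_left]

theorem combInsert_slide {A A' B B' E E' K K' : C} (f : A ⟶ E ⊗ B) (s : E ⟶ E')
    (g : E' ⊗ B' ⟶ A') (h : B ⊗ K ⟶ B' ⊗ K') :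
    combInsert (f ≫ s ▷ B) g h = combInsert f (s ▷ B' ≫ g) h := by
  simp only [combInsert, comp_whiskerRight, Category.assoc]
  rw [reassoc_of% whiskerRight_whiskerRight_associator_whiskerLeft]

end

theorem comb_insertion_respects_sliding_general {C : Type*} [Category C]
    [MonoidalCategory C] {A A' B B' E E' K K' : C}
    (s : E ⟶ E') (f₁ : A ⟶ E ⊗ B) (g₂ : E' ⊗ B' ⟶ A')
    (f₂ : A ⟶ E' ⊗ B) (g₁ : E ⊗ B' ⟶ A')
    (hf : f₂ = f₁ ≫ (s ▷ B)) (hg : g₁ = (s ▷ B') ≫ g₂)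
    (h : B ⊗ K ⟶ B' ⊗ K') :
    combInsert f₁ g₁ h = combInsert f₂ g₂ h := by
  rw [hf, hg, combInsert_slide]

/-- Comb insertion is well-defined under optic (sliding) equivalence. -/
theorem comb_insertion_respects_sliding {C : Type*} [Category C]
    [MonoidalCategory C] [SymmetricCategory C] {A A' B B' E E' K K' : C}
    (s : E ⟶ E') (f₁ : A ⟶ E ⊗ B) (g₂ : E' ⊗ B' ⟶ A')
    (f₂ : A ⟶ E' ⊗ B) (g₁ : E ⊗ B' ⟶ A')
    (hf : f₂ = f₁ ≫ (s ▷ B)) (hg : g₁ = (s ▷ B') ≫ g₂)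
    (h : B ⊗ K ⟶ B' ⊗ K') :
    combInsert f₁ g₁ h = combInsert f₂ g₂ h :=
  comb_insertion_respects_sliding_general s f₁ g₂ f₂ g₁ hf hg h
end

section
/- For Markov kernels between standard Borel spaces: if f : X → Y and g : Y → X are Markov kernels with g ∘ f = id_X and f ∘ g = id_Y (composition by integration, identity being the Dirac kernel), then f is deterministic, i.e. f commutes with copying: for all x and measurable S ⊆ Y, T ⊆ Y, f(x, S ∩ T) equals the value at x of the kernel (f ⊗ f) ∘ Δ evaluated on S × T, equivalently f(x, S)·f(x, T) = f(x, S ∩ T). -/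
/-!
Fix a measurable `S ⊆ Y` and put `u x := f x S ∈ [0, 1]`. Since `f ∘ g = id`, each `g y`
integrates `u` to `1_S(y) ∈ {0, 1}`, which forces `u` to be `g y`-a.e. constant, so `g y`
integrates `u²` to the same value. Integrating over `f x` and using `g ∘ f = id` then gives
`u x ^ 2 = u x`: every `f x` is `{0, 1}`-valued, hence multiplicative on intersections.
-/

open MeasureTheory

open scoped ENNReal

theorem ENNReal.eq_zero_or_one_of_mul_self_eq {a : ℝ≥0∞} (ha : a ≠ ∞) (h : a * a = a) :
    a = 0 ∨ a = 1 := by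
  rcases eq_or_ne a 0 with h0 | h0
  · exact Or.inl h0
  · exact Or.inr ((ENNReal.mul_eq_left h0 ha).1 h)

section ProbabilityMeasure

variable {α : Type*} [MeasurableSpace α] {μ : Measure α} [IsProbabilityMeasure μ]

theorem measure_inter_eq_mul_of_zero_or_one {S T : Set α} (hT : MeasurableSet T)
    (hS01 : μ S = 0 ∨ μ S = 1) (hT01 : μ T = 0 ∨ μ T = 1) : μ S * μ T = μ (S ∩ T) := by
  rcases hS01 with hS0 | hS1
  · rw [hS0, measure_inter_null_of_null_left T hS0, zero_mul]
  rcases hT01 with hT0 | hT1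
  · rw [hT0, measure_inter_null_of_null_right S hT0, mul_zero]
  rw [measure_inter_conull ((prob_compl_eq_zero_iff hT).2 hT1), hS1, hT1, one_mul]

theorem lintegral_mul_self_eq_lintegral_of_le_one {u : α → ℝ≥0∞} (hu : Measurable u)
    (hle : ∀ a, u a ≤ 1) (h01 : ∫⁻ a, u a ∂μ = 0 ∨ ∫⁻ a, u a ∂μ = 1) :
    ∫⁻ a, u a * u a ∂μ = ∫⁻ a, u a ∂μ := by
  obtain ⟨c, hc, huc⟩ : ∃ c : ℝ≥0∞, c * c = c ∧ u =ᵐ[μ] fun _ => c := by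
    rcases h01 with h0 | h1
    · exact ⟨0, mul_zero 0, (lintegral_eq_zero_iff hu).1 h0⟩
    · refine ⟨1, mul_one 1, ae_eq_of_ae_le_of_lintegral_le (ae_of_all _ hle) (by simp [h1])
        aemeasurable_const (by simp [h1])⟩
  exact lintegral_congr_ae <|
    huc.mono fun a (ha : u a = c) => show u a * u a = u a by rw [ha, hc]

end ProbabilityMeasure

section LeftInverse

variable {X Y : Type*} [MeasurableSpace X] [MeasurableSpace Y]
  {f : X → Measure Y} {g : Y → Measure X}

theorem lintegral_lintegral_of_bind_eq_dirac (hg : Measurable g)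
    (hgf : ∀ x, (f x).bind g = Measure.dirac x) {v : X → ℝ≥0∞} (hv : Measurable v) (x : X) :
    ∫⁻ y, ∫⁻ x', v x' ∂(g y) ∂(f x) = v x := by
  rw [← Measure.lintegral_bind hg.aemeasurable hv.aemeasurable, hgf, lintegral_dirac' x hv]

theorem eq_of_lintegral_eq_of_bind_eq_dirac (hg : Measurable g)
    (hgf : ∀ x, (f x).bind g = Measure.dirac x) {v w : X → ℝ≥0∞} (hv : Measurable v)
    (hw : Measurable w) (h : ∀ y, ∫⁻ x, v x ∂(g y) = ∫⁻ x, w x ∂(g y)) : v = w := by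
  funext x
  rw [← lintegral_lintegral_of_bind_eq_dirac hg hgf hv,
    ← lintegral_lintegral_of_bind_eq_dirac hg hgf hw]
  simp only [h]

end LeftInverse

theorem inverse_kernels_deterministic_general {X Y : Type*} [MeasurableSpace X]
    [MeasurableSpace Y]
    (f : X → Measure Y) (g : Y → Measure X)
    (hf : ∀ x, IsProbabilityMeasure (f x))
    (hg : ∀ y, IsProbabilityMeasure (g y))
    (hfm : ∀ E : Set Y, MeasurableSet E → Measurable fun x => f x E)
    (hgm : ∀ E : Set X, MeasurableSet E → Measurable fun y => g y E)
    (hgf : ∀ (x : X) (E : Set X), MeasurableSet E →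
      ∫⁻ y, g y E ∂(f x) = Measure.dirac x E)
    (hfg : ∀ (y : Y) (E : Set Y), MeasurableSet E →
      ∫⁻ x, f x E ∂(g y) = Measure.dirac y E) :
    ∀ (x : X) (S T : Set Y), MeasurableSet S → MeasurableSet T →
      f x S * f x T = f x (S ∩ T) := by
  have hgmeas : Measurable g := Measure.measurable_of_measurable_coe g hgm
  have hbind : ∀ x, (f x).bind g = Measure.dirac x := fun x => by
    ext E hE
    rw [Measure.bind_apply hE hgmeas.aemeasurable]
    exact hgf x E hE
  have zero_or_one : ∀ {S : Set Y}, MeasurableSet S → ∀ x, f x S = 0 ∨ f x S = 1 := by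
    intro S hS x
    have hu := hfm S hS
    have hidem : (fun x => f x S * f x S) = fun x => f x S :=
      eq_of_lintegral_eq_of_bind_eq_dirac hgmeas hbind (hu.mul hu) hu fun y =>
        lintegral_mul_self_eq_lintegral_of_le_one hu (fun _ => prob_le_one)
          ((hfg y S hS).symm ▸ Measure.dirac_apply_eq_zero_or_one)
    exact ENNReal.eq_zero_or_one_of_mul_self_eq (measure_ne_top _ _) (congrFun hidem x)
  intro x S T hS hT
  exact measure_inter_eq_mul_of_zero_or_one hT (zero_or_one hS x) (zero_or_one hT x)

/-- If Markov kernels `f : X → Y` and `g : Y → X` between standard Borel spaces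
are mutually inverse (`g ∘ f = id_X`, `f ∘ g = id_Y`), then `f` is
deterministic: `f x S * f x T = f x (S ∩ T)`. -/
theorem inverse_kernels_deterministic {X Y : Type*} [MeasurableSpace X]
    [MeasurableSpace Y] [StandardBorelSpace X] [StandardBorelSpace Y]
    (f : X → Measure Y) (g : Y → Measure X)
    (hf : ∀ x, IsProbabilityMeasure (f x))
    (hg : ∀ y, IsProbabilityMeasure (g y))
    (hfm : ∀ E : Set Y, MeasurableSet E → Measurable fun x => f x E)
    (hgm : ∀ E : Set X, MeasurableSet E → Measurable fun y => g y E)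
    (hgf : ∀ (x : X) (E : Set X), MeasurableSet E →
      ∫⁻ y, g y E ∂(f x) = Measure.dirac x E)
    (hfg : ∀ (y : Y) (E : Set Y), MeasurableSet E →
      ∫⁻ x, f x E ∂(g y) = Measure.dirac y E) :
    ∀ (x : X) (S T : Set Y), MeasurableSet S → MeasurableSet T →
      f x S * f x T = f x (S ∩ T) :=
  inverse_kernels_deterministic_general f g hf hg hfm hgm hgf hfg
end

section
/- For stochastic matrices on finite sets: if f : X → Y and g : Y → X satisfy g∘f = id_X and f∘g = id_Y, then f is deterministic: for every x there is a unique y with f(y|x) = 1, and f(y'|x) = 0 for y' ≠ y. -/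
/-!
Every entry of the stochastic matrix `g` is at most `1`, while the diagonal entry of `f ∘ g = id`
says that the `f x`-weighted average of the column `g · x` equals `1`; hence `g y x = 1` wherever
`f x y ≠ 0`. If `f x y` and `f x y'` were both nonzero with `y ≠ y'`, the vanishing entry
`(g ∘ f) y y' = ∑ x', g y x' * f x' y'` would contain the positive term `g y x * f x y' = f x y'`.
So each row of `f` is supported at a single point, where it must equal `1`.
-/

open NNReal Finset

namespace NNReal

variable {ι : Type*} {s : Finset ι}

theorem eq_one_of_sum_mul_eq_sum {p q : ι → ℝ≥0} (hq : ∀ i ∈ s, q i ≤ 1)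
    (h : ∑ i ∈ s, p i * q i = ∑ i ∈ s, p i) {i : ι} (hi : i ∈ s) (hpi : p i ≠ 0) :
    q i = 1 := by
  by_contra hqi
  have hlt : p i * q i < p i :=
    mul_lt_of_lt_one_right (pos_iff_ne_zero.mpr hpi) ((hq i hi).lt_of_ne hqi)
  have : ∑ j ∈ s, p j * q j < ∑ j ∈ s, p j :=
    sum_lt_sum (fun j hj => mul_le_of_le_one_right (zero_le) (hq j hj)) ⟨i, hi, hlt⟩
  exact this.ne h

theorem existsUnique_point_mass_of_sum_eq_one [Fintype ι] {p : ι → ℝ≥0}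
    (hp : ∑ i, p i = 1) (hsupp : ∀ i j, p i ≠ 0 → p j ≠ 0 → i = j) :
    ∃! i, p i = 1 ∧ ∀ j, j ≠ i → p j = 0 := by
  obtain ⟨i, -, hi⟩ := exists_ne_zero_of_sum_ne_zero (hp.trans_ne one_ne_zero)
  have hzero : ∀ j, j ≠ i → p j = 0 := fun j hji => by
    by_contra hj
    exact hji (hsupp j i hj hi)
  have hone : p i = 1 := by
    rwa [sum_eq_single i (fun j _ => hzero j) (absurd (mem_univ i))] at hp
  exact ⟨i, ⟨hone, hzero⟩, fun j ⟨hj, _⟩ => hsupp j i (hj ▸ one_ne_zero) hi⟩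

end NNReal

/-- If stochastic matrices `f : X → Y` and `g : Y → X` are mutually inverse,
then `f` is deterministic: each row of `f` is a point mass. -/
theorem inverse_stochastic_matrices_deterministic {X Y : Type} [Fintype X]
    [Fintype Y] [DecidableEq X] [DecidableEq Y]
    (f : X → Y → ℝ≥0) (g : Y → X → ℝ≥0)
    (hf : ∀ x, ∑ y, f x y = 1) (hg : ∀ y, ∑ x, g y x = 1)
    (hgf : ∀ x x', ∑ y, f x y * g y x' = if x = x' then 1 else 0)
    (hfg : ∀ y y', ∑ x, g y x * f x y' = if y = y' then 1 else 0) :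
    ∀ x : X, ∃! y : Y, f x y = 1 ∧ ∀ y', y' ≠ y → f x y' = 0 := by
  intro x
  have hg_le_one : ∀ y x', g y x' ≤ 1 := fun y x' =>
    hg y ▸ single_le_sum (fun _ _ => zero_le) (mem_univ x')
  have hg_eq_one : ∀ y, f x y ≠ 0 → g y x = 1 := fun y hy =>
    eq_one_of_sum_mul_eq_sum (fun y _ => hg_le_one y x) (by simpa [hf x] using hgf x x)
      (mem_univ y) hy
  refine existsUnique_point_mass_of_sum_eq_one (hf x) fun y y' hy hy' => ?_
  by_contra hne
  have hterm := sum_eq_zero_iff.mp ((hfg y y').trans (if_neg hne)) x (mem_univ x)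
  rw [hg_eq_one y hy, one_mul] at hterm
  exact hy' hterm
end

section
/- In BorelStoch, atomic morphisms are not closed under composition: let X = [0,1] and define the kernel p : X × {0,1} → X by p(x,0) = δ_x and p(x,1) = ν (Lebesgue measure). Then every point of X is an atom of p (so p is completely atomic), but the composite p ∘ σ with the Dirac state σ = δ_{(x₀,1)} equals ν, which has no atoms. -/
open MeasureTheory

instance isProbabilityMeasure_volume_restrict_Icc_zero_one :
    IsProbabilityMeasure (volume.restrict (Set.Icc (0 : ℝ) 1)) :=
  ⟨by simp [Real.volume_Icc]⟩

theorem setOf_exists_measure_singleton_pos_eq_univ_of_dirac {α X : Type*} [MeasurableSpace X]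
    [MeasurableSingletonClass X] (p : α → Measure X) (hp : ∀ x, ∃ a, p a = Measure.dirac x) :
    {x | ∃ a, 0 < p a {x}} = Set.univ := by
  refine Set.eq_univ_of_forall fun x => ?_
  obtain ⟨a, ha⟩ := hp x
  exact ⟨a, by simp [ha]⟩

/-- In `BorelStoch`, atomic morphisms are not closed under composition: the
kernel `p` with `p(x,0) = δ_x` and `p(x,1) = ν` is completely atomic (each
`p a` gives full mass to the set of atoms of `p`), yet the composite with the
Dirac state at `(x₀, 1)` equals `ν`, which has no atoms. -/
theorem atomic_not_closed_under_composition
    (p : ℝ × Bool → Measure ℝ)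
    (hp0 : ∀ x : ℝ, p (x, false) = Measure.dirac x)
    (hp1 : ∀ x : ℝ, p (x, true) = volume.restrict (Set.Icc (0:ℝ) 1)) :
    (∀ a : ℝ × Bool, p a {x : ℝ | ∃ a', 0 < p a' {x}} = 1) ∧
    (∀ x₀ : ℝ, p (x₀, true) = volume.restrict (Set.Icc (0:ℝ) 1) ∧
      ∀ x : ℝ, p (x₀, true) {x} = 0) := by
  have hprob : ∀ a, IsProbabilityMeasure (p a) := by
    rintro ⟨x, _ | _⟩
    · rw [hp0 x]; infer_instance
    · rw [hp1 x]; infer_instance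
  have hatoms :=
    setOf_exists_measure_singleton_pos_eq_univ_of_dirac p fun x => ⟨(x, false), hp0 x⟩
  refine ⟨fun a => by rw [hatoms]; exact measure_univ, fun x₀ => ⟨hp1 x₀, fun x => ?_⟩⟩
  rw [hp1 x₀]
  exact measure_singleton x
end
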